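/- Let o_m be as above with residue field of even characteristic, and let A = [[0, a⁻¹α],[a, β]] ∈ M_2(o_m) with β a unit. Then the determinant map from the centralizer C_{GL_2(o_m)}(A) to o_m^× is surjective. -/

import Mathlib

/-!
The centralizer of `A` contains `x • 1 + y • A`, whose determinant is the binary quadratic form
`x ^ 2 + tr A · x y + det A · y ^ 2` with `tr A = β` a unit. The residue field is finite of
characteristic `2`, so `w` has a square root `x` modulo `π`; then `y ↦ x² - w + β x y - α y²`
has nilpotent value and unit derivative `β x` at `y = 0`, and Newton's iteration in the ring
`o_m`, where `π` is nilpotent, produces an exact root `y`.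
-/

open Polynomial

theorem Ideal.exists_sq_sub_mem_of_two_mem {R : Type*} [CommRing R] (I : Ideal R) [I.IsMaximal]
    [Finite (R ⧸ I)] (h2 : (2 : R) ∈ I) (w : R) : ∃ x, x ^ 2 - w ∈ I := by
  let := Ideal.Quotient.field I
  have hchar : ringChar (R ⧸ I) = 2 :=
    CharP.ringChar_of_prime_eq_zero Nat.prime_two <| by
      exact_mod_cast (map_ofNat (Ideal.Quotient.mk I) 2).symm.trans
        (Ideal.Quotient.eq_zero_iff_mem.mpr h2)
  obtain ⟨s, hs⟩ := FiniteField.isSquare_of_char_two hchar (Ideal.Quotient.mk I w)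
  obtain ⟨x, rfl⟩ := Ideal.Quotient.mk_surjective s
  exact ⟨x, Ideal.Quotient.eq_zero_iff_mem.mp (by rw [map_sub, map_pow, hs, sq, sub_self])⟩

theorem Ideal.isNilpotent_mk_span_pow_of_dvd {R : Type*} [CommRing R] {π r : R} (m : ℕ)
    (h : π ∣ r) : IsNilpotent (Ideal.Quotient.mk (Ideal.span {π ^ m}) r) := by
  obtain ⟨t, rfl⟩ := h
  refine ⟨m, ?_⟩
  rw [← map_pow, Ideal.Quotient.eq_zero_iff_mem, mul_pow]
  exact Ideal.mul_mem_right _ _ (Ideal.mem_span_singleton_self _)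

theorem exists_add_mul_add_mul_sq_eq_zero {R : Type*} [CommRing R] {c b n : R}
    (hc : IsNilpotent c) (hb : IsUnit b) : ∃ y, c + b * y + n * y ^ 2 = 0 := by
  let P : R[X] := C c + C b * X + C n * X ^ 2
  obtain ⟨y, -, hy⟩ := (P.existsUnique_nilpotent_sub_and_aeval_eq_zero (x := (0 : R))
    (by simpa [P] using hc) (by simpa [P] using hb)).exists
  exact ⟨y, by simpa [P] using hy⟩

theorem exists_sq_add_mul_add_mul_sq_eq {R : Type*} [CommRing R] {t n w x : R} (ht : IsUnit t)
    (hw : IsUnit w) (hx : IsNilpotent (x ^ 2 - w)) :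
    ∃ y, x ^ 2 + t * x * y + n * y ^ 2 = w := by
  have hxu : IsUnit x := by
    refine (isUnit_pow_iff two_ne_zero).mp ?_
    simpa using hx.isUnit_add_left_of_commute hw (Commute.all _ _)
  obtain ⟨y, hy⟩ := exists_add_mul_add_mul_sq_eq_zero (n := n) hx (ht.mul hxu)
  exact ⟨y, by linear_combination hy⟩

theorem Matrix.det_fin_two_smul_one_add_smul {R : Type*} [CommRing R] (x y : R)
    (A : Matrix (Fin 2) (Fin 2) R) :
    (x • 1 + y • A).det = x ^ 2 + A.trace * x * y + A.det * y ^ 2 := by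
  simp only [det_fin_two, trace_fin_two, add_apply, smul_apply, one_apply_eq,
    one_apply_ne zero_ne_one, one_apply_ne one_ne_zero, smul_eq_mul]
  ring

theorem stmt_3_general {O : Type*} [CommRing O] [IsDomain O] [IsDiscreteValuationRing O]
    (π : O) (hπ : Irreducible π)
    [Finite (O ⧸ Ideal.span {π})]
    (hres2 : π ∣ 2)
    (m : ℕ)
    (a β : (O ⧸ Ideal.span {π ^ m})ˣ) (α : O ⧸ Ideal.span {π ^ m})
    (w : (O ⧸ Ideal.span {π ^ m})ˣ) :
    ∃ M : Matrix (Fin 2) (Fin 2) (O ⧸ Ideal.span {π ^ m}),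
      M * !![0, ((a⁻¹ : (O ⧸ Ideal.span {π ^ m})ˣ) : O ⧸ Ideal.span {π ^ m}) * α;
             ((a : (O ⧸ Ideal.span {π ^ m})ˣ) : O ⧸ Ideal.span {π ^ m}),
             ((β : (O ⧸ Ideal.span {π ^ m})ˣ) : O ⧸ Ideal.span {π ^ m})] =
        !![0, ((a⁻¹ : (O ⧸ Ideal.span {π ^ m})ˣ) : O ⧸ Ideal.span {π ^ m}) * α;
           ((a : (O ⧸ Ideal.span {π ^ m})ˣ) : O ⧸ Ideal.span {π ^ m}),
           ((β : (O ⧸ Ideal.span {π ^ m})ˣ) : O ⧸ Ideal.span {π ^ m})] * M ∧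
      IsUnit M.det ∧ M.det = (w : O ⧸ Ideal.span {π ^ m}) := by
  have : (Ideal.span {π}).IsMaximal := PrincipalIdealRing.isMaximal_of_irreducible hπ
  set A : Matrix (Fin 2) (Fin 2) (O ⧸ Ideal.span {π ^ m}) := !![0, ↑a⁻¹ * α; ↑a, ↑β]
  obtain ⟨w₀, hw₀⟩ := Ideal.Quotient.mk_surjective (w : O ⧸ Ideal.span {π ^ m})
  obtain ⟨x, hx⟩ :=
    (Ideal.span {π}).exists_sq_sub_mem_of_two_mem (Ideal.mem_span_singleton.mpr hres2) w₀
  obtain ⟨y, hy⟩ := exists_sq_add_mul_add_mul_sq_eq (t := A.trace) (n := A.det)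
    (by simp [A, Matrix.trace_fin_two]) w.isUnit
    (by simpa [hw₀] using
      Ideal.isNilpotent_mk_span_pow_of_dvd m (Ideal.mem_span_singleton.mp hx))
  have hdet : (Ideal.Quotient.mk (Ideal.span {π ^ m}) x • 1 + y • A).det =
      (w : O ⧸ Ideal.span {π ^ m}) := by
    rw [Matrix.det_fin_two_smul_one_add_smul, hy]
  refine ⟨_, ?_, hdet ▸ w.isUnit, hdet⟩
  exact (((Commute.one_left A).smul_left _).add_left ((Commute.refl A).smul_left y)).eq

/-- for `A = [[0, a⁻¹α],[a, β]]` over `o_m` (residue characteristic 2)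
with `β` a unit, the determinant map from the centralizer of `A` in `GL₂(o_m)`
onto `o_m^×` is surjective. -/
theorem stmt_3 {O : Type*} [CommRing O] [IsDomain O] [IsDiscreteValuationRing O]
    (π : O) (hπ : Irreducible π)
    [IsAdicComplete (Ideal.span {π}) O] [Finite (O ⧸ Ideal.span {π})]
    (hres2 : π ∣ 2)
    (m : ℕ) (hm : 1 ≤ m)
    (a β : (O ⧸ Ideal.span {π ^ m})ˣ) (α : O ⧸ Ideal.span {π ^ m})
    (w : (O ⧸ Ideal.span {π ^ m})ˣ) :
    ∃ M : Matrix (Fin 2) (Fin 2) (O ⧸ Ideal.span {π ^ m}),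
      M * !![0, ((a⁻¹ : (O ⧸ Ideal.span {π ^ m})ˣ) : O ⧸ Ideal.span {π ^ m}) * α;
             ((a : (O ⧸ Ideal.span {π ^ m})ˣ) : O ⧸ Ideal.span {π ^ m}),
             ((β : (O ⧸ Ideal.span {π ^ m})ˣ) : O ⧸ Ideal.span {π ^ m})] =
        !![0, ((a⁻¹ : (O ⧸ Ideal.span {π ^ m})ˣ) : O ⧸ Ideal.span {π ^ m}) * α;
           ((a : (O ⧸ Ideal.span {π ^ m})ˣ) : O ⧸ Ideal.span {π ^ m}),
           ((β : (O ⧸ Ideal.span {π ^ m})ˣ) : O ⧸ Ideal.span {π ^ m})] * M ∧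
      IsUnit M.det ∧ M.det = (w : O ⧸ Ideal.span {π ^ m}) :=
  stmt_3_general π hπ hres2 m a β α w
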